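/- arXiv:2510.05993 — 3 statements merged into one kernel-verified Lean document; each statement's English description precedes it below -/
import Mathlib

section
/- Schur complement error bound: let S = A_{ΓΓ} − A_{ΓI} A_{II}⁻¹ A_{ΓI}ᵀ and S_F = A_{ΓΓ,F} − A_{ΓI,F} A_{II,F}⁻¹ A_{ΓI,F}ᵀ where all blocks are real matrices of compatible sizes with A_{II}, A_{II,F} invertible and S symmetric positive definite. Then for every u, |uᵀSu − uᵀS_F u| ≤ γ · uᵀSu, where γ = (‖A_{ΓΓ} − A_{ΓΓ,F}‖₂ + ‖A_{ΓI} − A_{ΓI,F}‖₂·‖A_{II}⁻¹A_{ΓI}ᵀ‖₂ + ‖A_{ΓI,F}‖₂·(‖A_{II}⁻¹ − A_{II,F}⁻¹‖₂·‖A_{ΓI}ᵀ‖₂ + ‖A_{II,F}⁻¹‖₂·‖A_{ΓI}ᵀ − A_{ΓI,F}ᵀ‖₂)) · ‖S⁻¹‖₂. -/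
open Matrix

/-- The spectral (ℓ²-operator) norm of a real matrix. -/
noncomputable def specNorm {m n : ℕ} (A : Matrix (Fin m) (Fin n) ℝ) : ℝ :=
  ‖LinearMap.toContinuousLinearMap (Matrix.toEuclideanLin A)‖

lemma specNorm_nonneg {m n : ℕ} (A : Matrix (Fin m) (Fin n) ℝ) : 0 ≤ specNorm A :=
  norm_nonneg _

lemma norm_toEuclideanLin_apply_le {m n : ℕ} (A : Matrix (Fin m) (Fin n) ℝ)
    (x : EuclideanSpace ℝ (Fin n)) :
    ‖Matrix.toEuclideanLin A x‖ ≤ specNorm A * ‖x‖ := by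
  have := (LinearMap.toContinuousLinearMap (Matrix.toEuclideanLin A)).le_opNorm x
  simpa [specNorm] using this

lemma specNorm_sub_le {m n : ℕ} (A B : Matrix (Fin m) (Fin n) ℝ) :
    specNorm (A - B) ≤ specNorm A + specNorm B := by
  simp only [specNorm, map_sub]
  exact norm_sub_le _ _

lemma specNorm_add_le {m n : ℕ} (A B : Matrix (Fin m) (Fin n) ℝ) :
    specNorm (A + B) ≤ specNorm A + specNorm B := by
  simp only [specNorm, map_add]
  exact norm_add_le _ _

lemma specNorm_mul_le {m n k : ℕ} (A : Matrix (Fin m) (Fin n) ℝ)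
    (B : Matrix (Fin n) (Fin k) ℝ) :
    specNorm (A * B) ≤ specNorm A * specNorm B := by
  apply ContinuousLinearMap.opNorm_le_bound _ (mul_nonneg (specNorm_nonneg A) (specNorm_nonneg B))
  intro x
  have happ : Matrix.toEuclideanLin (A * B) x = Matrix.toEuclideanLin A (Matrix.toEuclideanLin B x) := by
    simp [Matrix.toEuclideanLin_apply, Matrix.mulVec_mulVec]
  calc ‖(LinearMap.toContinuousLinearMap (Matrix.toEuclideanLin (A * B))) x‖
      = ‖Matrix.toEuclideanLin A (Matrix.toEuclideanLin B x)‖ := by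
        rw [LinearMap.coe_toContinuousLinearMap', happ]
    _ ≤ specNorm A * ‖Matrix.toEuclideanLin B x‖ := norm_toEuclideanLin_apply_le _ _
    _ ≤ specNorm A * (specNorm B * ‖x‖) := by
        exact mul_le_mul_of_nonneg_left (norm_toEuclideanLin_apply_le _ _) (specNorm_nonneg A)
    _ = specNorm A * specNorm B * ‖x‖ := by ring

lemma abs_dot_mulVec_le {n : ℕ} (A : Matrix (Fin n) (Fin n) ℝ) (u : Fin n → ℝ) :
    |u ⬝ᵥ A.mulVec u| ≤ specNorm A * (u ⬝ᵥ u) := by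
  set x : EuclideanSpace ℝ (Fin n) := (WithLp.equiv 2 _).symm u with hx
  have h1 : u ⬝ᵥ A.mulVec u = inner ℝ x (Matrix.toEuclideanLin A x) := by
    rw [Matrix.toEuclideanLin_apply]
    simp [EuclideanSpace.inner_eq_star_dotProduct, hx, dotProduct_comm]
  have h2 : u ⬝ᵥ u = ‖x‖ ^ 2 := by
    have : (inner ℝ x x : ℝ) = ‖x‖ ^ 2 := real_inner_self_eq_norm_sq x
    rw [← this]
    rw [EuclideanSpace.inner_eq_star_dotProduct]; simp [hx]
  rw [h1, h2]
  calc |(inner ℝ x (Matrix.toEuclideanLin A x) : ℝ)|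
      ≤ ‖x‖ * ‖Matrix.toEuclideanLin A x‖ := abs_real_inner_le_norm _ _
    _ ≤ ‖x‖ * (specNorm A * ‖x‖) :=
        mul_le_mul_of_nonneg_left (norm_toEuclideanLin_apply_le _ _) (norm_nonneg _)
    _ = specNorm A * ‖x‖ ^ 2 := by ring

lemma posdef_cauchy_schwarz {n : ℕ} {S : Matrix (Fin n) (Fin n) ℝ} (hS : S.PosDef)
    (u w : Fin n → ℝ) :
    (u ⬝ᵥ S.mulVec w) * (u ⬝ᵥ S.mulVec w) ≤ (u ⬝ᵥ S.mulVec u) * (w ⬝ᵥ S.mulVec w) := by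
  letI G := S.toSeminormedAddCommGroup hS.posSemidef
  letI I := S.toInnerProductSpace hS.posSemidef
  have h := @real_inner_mul_inner_self_le (Fin n → ℝ) G I u w
  have e : ∀ a b : Fin n → ℝ, (@inner ℝ _ I.toInner a b : ℝ) = a ⬝ᵥ S.mulVec b := by
    intro a b; change (S *ᵥ b) ⬝ᵥ star a = _; rw [star_trivial, dotProduct_comm]
  rwa [e, e, e] at h

lemma dot_le_specNorm_inv_mul {n : ℕ} {S : Matrix (Fin n) (Fin n) ℝ} (hS : S.PosDef)
    (u : Fin n → ℝ) :
    u ⬝ᵥ u ≤ specNorm S⁻¹ * (u ⬝ᵥ S.mulVec u) := by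
  by_cases hu : u = 0
  · simp [hu]
  have hdet : IsUnit S.det := isUnit_iff_ne_zero.mpr (ne_of_gt hS.det_pos)
  have hSS : S * S⁻¹ = 1 := Matrix.mul_nonsing_inv S hdet
  set w : Fin n → ℝ := S⁻¹.mulVec u with hw
  have h1 : u ⬝ᵥ S.mulVec w = u ⬝ᵥ u := by
    rw [hw, Matrix.mulVec_mulVec, hSS, Matrix.one_mulVec]
  have h2 : w ⬝ᵥ S.mulVec w = u ⬝ᵥ S⁻¹.mulVec u := by
    rw [hw, Matrix.mulVec_mulVec, hSS, Matrix.one_mulVec, dotProduct_comm]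
  have hcs := posdef_cauchy_schwarz hS u w
  rw [h1, h2] at hcs
  have h3 : u ⬝ᵥ S⁻¹.mulVec u ≤ specNorm S⁻¹ * (u ⬝ᵥ u) :=
    le_trans (le_abs_self _) (abs_dot_mulVec_le _ _)
  have hq : 0 < u ⬝ᵥ S.mulVec u := by simpa using hS.dotProduct_mulVec_pos hu
  have hu2 : 0 < u ⬝ᵥ u := by
    have : u ⬝ᵥ u = ∑ j, u j * u j := rfl
    rcases Function.ne_iff.mp hu with ⟨j, hj⟩
    rw [this]
    exact Finset.sum_pos' (fun k _ => mul_self_nonneg _)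
      ⟨j, Finset.mem_univ j, mul_self_pos.mpr hj⟩
  nlinarith [hcs, h3, hq, hu2]

/-- Schur complement error bound: with S = A_{ΓΓ} − A_{ΓI} A_{II}⁻¹ A_{ΓI}ᵀ symmetric
positive definite and S_F its approximation built from approximate blocks,
|uᵀSu − uᵀS_F u| ≤ γ uᵀSu with the explicit γ. -/
theorem schur_complement_error_bound
    {g i : ℕ}
    (AGG AGG_F : Matrix (Fin g) (Fin g) ℝ)
    (AGI AGI_F : Matrix (Fin g) (Fin i) ℝ)
    (AII AII_F : Matrix (Fin i) (Fin i) ℝ)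
    (hAII : IsUnit AII.det) (hAIIF : IsUnit AII_F.det)
    (S S_F : Matrix (Fin g) (Fin g) ℝ)
    (hSdef : S = AGG - AGI * AII⁻¹ * AGIᵀ)
    (hSFdef : S_F = AGG_F - AGI_F * AII_F⁻¹ * AGI_Fᵀ)
    (hS : S.PosDef)
    (γ : ℝ)
    (hγ : γ = (specNorm (AGG - AGG_F)
        + specNorm (AGI - AGI_F) * specNorm (AII⁻¹ * AGIᵀ)
        + specNorm AGI_F * (specNorm (AII⁻¹ - AII_F⁻¹) * specNorm AGIᵀ
            + specNorm AII_F⁻¹ * specNorm (AGIᵀ - AGI_Fᵀ))) * specNorm S⁻¹) :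
    ∀ u : Fin g → ℝ,
      |u ⬝ᵥ S.mulVec u - u ⬝ᵥ S_F.mulVec u| ≤ γ * (u ⬝ᵥ S.mulVec u) := by
  intro u
  set c : ℝ := specNorm (AGG - AGG_F)
      + specNorm (AGI - AGI_F) * specNorm (AII⁻¹ * AGIᵀ)
      + specNorm AGI_F * (specNorm (AII⁻¹ - AII_F⁻¹) * specNorm AGIᵀ
          + specNorm AII_F⁻¹ * specNorm (AGIᵀ - AGI_Fᵀ)) with hc
  have hcnn : 0 ≤ c := by
    apply add_nonneg
    apply add_nonneg (specNorm_nonneg _)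
    · exact mul_nonneg (specNorm_nonneg _) (specNorm_nonneg _)
    · exact mul_nonneg (specNorm_nonneg _)
        (add_nonneg (mul_nonneg (specNorm_nonneg _) (specNorm_nonneg _))
          (mul_nonneg (specNorm_nonneg _) (specNorm_nonneg _)))
  have hE : S - S_F = (AGG - AGG_F) - (AGI - AGI_F) * (AII⁻¹ * AGIᵀ)
      - AGI_F * ((AII⁻¹ - AII_F⁻¹) * AGIᵀ + AII_F⁻¹ * (AGIᵀ - AGI_Fᵀ)) := by
    rw [hSdef, hSFdef]
    simp only [Matrix.sub_mul, Matrix.mul_sub, Matrix.mul_add, Matrix.mul_assoc]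
    abel
  have hnE : specNorm (S - S_F) ≤ c := by
    rw [hE, hc]
    calc specNorm ((AGG - AGG_F) - (AGI - AGI_F) * (AII⁻¹ * AGIᵀ)
          - AGI_F * ((AII⁻¹ - AII_F⁻¹) * AGIᵀ + AII_F⁻¹ * (AGIᵀ - AGI_Fᵀ)))
        ≤ specNorm ((AGG - AGG_F) - (AGI - AGI_F) * (AII⁻¹ * AGIᵀ))
          + specNorm (AGI_F * ((AII⁻¹ - AII_F⁻¹) * AGIᵀ + AII_F⁻¹ * (AGIᵀ - AGI_Fᵀ))) :=
          specNorm_sub_le _ _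
      _ ≤ specNorm (AGG - AGG_F) + specNorm ((AGI - AGI_F) * (AII⁻¹ * AGIᵀ))
          + specNorm (AGI_F * ((AII⁻¹ - AII_F⁻¹) * AGIᵀ + AII_F⁻¹ * (AGIᵀ - AGI_Fᵀ))) := by
          gcongr
          exact specNorm_sub_le _ _
      _ ≤ specNorm (AGG - AGG_F) + specNorm (AGI - AGI_F) * specNorm (AII⁻¹ * AGIᵀ)
          + specNorm AGI_F * specNorm ((AII⁻¹ - AII_F⁻¹) * AGIᵀ + AII_F⁻¹ * (AGIᵀ - AGI_Fᵀ)) := by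
          gcongr
          · exact specNorm_mul_le _ _
          · exact specNorm_mul_le _ _
      _ ≤ specNorm (AGG - AGG_F) + specNorm (AGI - AGI_F) * specNorm (AII⁻¹ * AGIᵀ)
          + specNorm AGI_F * (specNorm ((AII⁻¹ - AII_F⁻¹) * AGIᵀ)
              + specNorm (AII_F⁻¹ * (AGIᵀ - AGI_Fᵀ))) := by
          gcongr
          · exact specNorm_nonneg _
          · exact specNorm_add_le _ _
      _ ≤ specNorm (AGG - AGG_F) + specNorm (AGI - AGI_F) * specNorm (AII⁻¹ * AGIᵀ)
          + specNorm AGI_F * (specNorm (AII⁻¹ - AII_F⁻¹) * specNorm AGIᵀ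
              + specNorm AII_F⁻¹ * specNorm (AGIᵀ - AGI_Fᵀ)) := by
          gcongr
          · exact specNorm_nonneg _
          · exact specNorm_mul_le _ _
          · exact specNorm_mul_le _ _
  have hq : 0 ≤ u ⬝ᵥ S.mulVec u := by
    by_cases hu : u = 0
    · simp [hu]
    · exact le_of_lt (by simpa using hS.dotProduct_mulVec_pos hu)
  have hdiff : u ⬝ᵥ S.mulVec u - u ⬝ᵥ S_F.mulVec u = u ⬝ᵥ (S - S_F).mulVec u := by
    rw [Matrix.sub_mulVec, dotProduct_sub]
  calc |u ⬝ᵥ S.mulVec u - u ⬝ᵥ S_F.mulVec u|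
      = |u ⬝ᵥ (S - S_F).mulVec u| := by rw [hdiff]
    _ ≤ specNorm (S - S_F) * (u ⬝ᵥ u) := abs_dot_mulVec_le _ _
    _ ≤ c * (u ⬝ᵥ u) := by
        apply mul_le_mul_of_nonneg_right hnE
        by_cases hu : u = 0
        · simp [hu]
        · have : u ⬝ᵥ u = ∑ j, u j * u j := rfl
          rw [this]; exact Finset.sum_nonneg fun k _ => mul_self_nonneg _
    _ ≤ c * (specNorm S⁻¹ * (u ⬝ᵥ S.mulVec u)) :=
        mul_le_mul_of_nonneg_left (dot_le_specNorm_inv_mul hS u) hcnn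
    _ = γ * (u ⬝ᵥ S.mulVec u) := by rw [hγ, hc]; ring
end

section
/- Lower bound for the BDDC preconditioned operator: let S̃ be a symmetric positive definite N×N matrix, R : ℝⁿ → ℝᴺ and R_D : ℝⁿ → ℝᴺ linear maps with RᵀR_D = R_Dᵀ R = Iₙ, and suppose M := (R_Dᵀ S̃⁻¹ R_D)⁻¹ exists. Then for all u ∈ ℝⁿ, uᵀ M u ≤ uᵀ Rᵀ S̃ R u. -/
open Matrix

lemma bddc_aux_dv {N m : ℕ} (B : Matrix (Fin N) (Fin m) ℝ) (x : Fin m → ℝ)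
    (y : Fin N → ℝ) : (B.mulVec x) ⬝ᵥ y = x ⬝ᵥ (Bᵀ.mulVec y) := by
  rw [dotProduct_mulVec, vecMul_transpose]

/-- Lower bound for the BDDC preconditioned operator: with S̃ symmetric positive
definite, RᵀR_D = R_DᵀR = I and M = (R_Dᵀ S̃⁻¹ R_D)⁻¹ invertible, for all u
uᵀMu ≤ uᵀ(Rᵀ S̃ R)u. -/
theorem bddc_lower_bound
    {N n : ℕ} (St : Matrix (Fin N) (Fin N) ℝ) (hSt : St.PosDef)
    (R R_D : Matrix (Fin N) (Fin n) ℝ)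
    (hPU1 : Rᵀ * R_D = 1) (hPU2 : R_Dᵀ * R = 1)
    (hMinv : IsUnit (R_Dᵀ * St⁻¹ * R_D).det) :
    ∀ u : Fin n → ℝ,
      u ⬝ᵥ ((R_Dᵀ * St⁻¹ * R_D)⁻¹).mulVec u ≤ u ⬝ᵥ (Rᵀ * St * R).mulVec u := by
  intro u
  set A := R_Dᵀ * St⁻¹ * R_D with hA
  set M := A⁻¹ with hM
  have hStInv : IsUnit St.det := isUnit_iff_ne_zero.2 hSt.det_pos.ne'
  have hStsymm : Stᵀ = St := hSt.1
  have hStInvSymm : (St⁻¹)ᵀ = St⁻¹ := by rw [transpose_nonsing_inv, hStsymm]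
  have hAsymm : Aᵀ = A := by
    rw [hA, transpose_mul, transpose_mul, transpose_transpose, hStInvSymm,
      Matrix.mul_assoc]
  have hMsymm : Mᵀ = M := by rw [hM, transpose_nonsing_inv, hAsymm]
  have hMA : M * A = 1 := Matrix.nonsing_inv_mul A hMinv
  have hStSt : St * St⁻¹ = 1 := Matrix.mul_nonsing_inv St hStInv
  have hInvSt : St⁻¹ * St = 1 := Matrix.nonsing_inv_mul St hStInv
  set w : Fin N → ℝ := (St⁻¹ * R_D * M).mulVec u with hw
  set v : Fin N → ℝ := R.mulVec u - w with hv
  have hpos : 0 ≤ v ⬝ᵥ St.mulVec v := by simpa using hSt.posSemidef.dotProduct_mulVec_nonneg v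
  have h1 : St * (St⁻¹ * R_D * M) = R_D * M := by
    rw [Matrix.mul_assoc St⁻¹, ← Matrix.mul_assoc St, hStSt, Matrix.one_mul]
  have hT1 : (R.mulVec u) ⬝ᵥ St.mulVec (R.mulVec u)
      = u ⬝ᵥ (Rᵀ * St * R).mulVec u := by
    rw [bddc_aux_dv, mulVec_mulVec, mulVec_mulVec, Matrix.mul_assoc]
  have hcross1 : (R.mulVec u) ⬝ᵥ St.mulVec w = u ⬝ᵥ M.mulVec u := by
    have key : Rᵀ * (St * (St⁻¹ * R_D * M)) = M := by
      rw [h1, ← Matrix.mul_assoc, hPU1, Matrix.one_mul]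
    rw [hw, mulVec_mulVec, bddc_aux_dv, mulVec_mulVec, key]
  have htr : (St⁻¹ * R_D * M)ᵀ = M * R_Dᵀ * St⁻¹ := by
    rw [transpose_mul, transpose_mul, hMsymm, hStInvSymm, Matrix.mul_assoc]
  have hcross2 : w ⬝ᵥ St.mulVec (R.mulVec u) = u ⬝ᵥ M.mulVec u := by
    have key : M * R_Dᵀ * St⁻¹ * St * R = M := by
      rw [Matrix.mul_assoc (M * R_Dᵀ) St⁻¹ St, hInvSt, Matrix.mul_one,
        Matrix.mul_assoc, hPU2, Matrix.mul_one]
    rw [hw, bddc_aux_dv, mulVec_mulVec, mulVec_mulVec, htr, key]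
  have hlast : w ⬝ᵥ St.mulVec w = u ⬝ᵥ M.mulVec u := by
    have key : M * R_Dᵀ * St⁻¹ * (St * (St⁻¹ * R_D * M)) = M := by
      rw [h1, ← Matrix.mul_assoc, Matrix.mul_assoc M R_Dᵀ St⁻¹,
        Matrix.mul_assoc M (R_Dᵀ * St⁻¹) R_D, ← hA, hMA, Matrix.one_mul]
    rw [hw, mulVec_mulVec, bddc_aux_dv, mulVec_mulVec, htr, key]
  have hexp : v ⬝ᵥ St.mulVec v
      = u ⬝ᵥ (Rᵀ * St * R).mulVec u - u ⬝ᵥ M.mulVec u := by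
    rw [hv, mulVec_sub, sub_dotProduct, dotProduct_sub, dotProduct_sub,
      hT1, hcross1, hcross2, hlast]
    ring
  linarith
end

section
/- Upper bound for the BDDC preconditioned operator: let S̃ be a symmetric positive definite N×N matrix, R, R_D ∈ ℝ^{N×n} with RᵀR_D = I, F := Rᵀ S̃ R, M := (R_Dᵀ S̃⁻¹ R_D)⁻¹ (assumed to exist), and E_D := R R_Dᵀ. Suppose ‖E_D v‖²_{S̃} ≤ C² ‖v‖²_{S̃} for all v ∈ ℝᴺ. Then for all u ∈ ℝⁿ, uᵀ F u ≤ C² · uᵀ M u. -/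
open Matrix

lemma quad_rw {N n : ℕ} (P : Matrix (Fin N) (Fin n) ℝ) (Q : Matrix (Fin N) (Fin N) ℝ)
    (u : Fin n → ℝ) :
    (P.mulVec u) ⬝ᵥ Q.mulVec (P.mulVec u) = u ⬝ᵥ (Pᵀ * Q * P).mulVec u := by
  rw [← mulVec_mulVec, ← mulVec_mulVec, dotProduct_mulVec u Pᵀ, vecMul_transpose]

/-- Upper bound for the BDDC preconditioned operator: with S̃ symmetric positive
definite, RᵀR_D = R_DᵀR = I, F = Rᵀ S̃ R, M = (R_Dᵀ S̃⁻¹ R_D)⁻¹ (invertible) and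
E_D = R R_Dᵀ satisfying ‖E_D v‖²_{S̃} ≤ C²‖v‖²_{S̃} for all v, we have
uᵀFu ≤ C² uᵀMu for all u. -/
theorem bddc_upper_bound
    {N n : ℕ} (St : Matrix (Fin N) (Fin N) ℝ) (hSt : St.PosDef)
    (R R_D : Matrix (Fin N) (Fin n) ℝ)
    (hPU1 : Rᵀ * R_D = 1) (hPU2 : R_Dᵀ * R = 1)
    (hMinv : IsUnit (R_Dᵀ * St⁻¹ * R_D).det)
    (C : ℝ)
    (hED : ∀ v : Fin N → ℝ,
      ((R * R_Dᵀ).mulVec v) ⬝ᵥ St.mulVec ((R * R_Dᵀ).mulVec v) ≤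
        C ^ 2 * (v ⬝ᵥ St.mulVec v)) :
    ∀ u : Fin n → ℝ,
      u ⬝ᵥ (Rᵀ * St * R).mulVec u ≤
        C ^ 2 * (u ⬝ᵥ ((R_Dᵀ * St⁻¹ * R_D)⁻¹).mulVec u) := by
  intro u
  have hSdet : IsUnit St.det := isUnit_iff_ne_zero.mpr (ne_of_gt hSt.det_pos)
  have hS1 : St * St⁻¹ = 1 := mul_nonsing_inv _ hSdet
  have hS2 : St⁻¹ * St = 1 := nonsing_inv_mul _ hSdet
  have hStT : Stᵀ = St := hSt.isHermitian.eq
  have hSinvT : (St⁻¹)ᵀ = St⁻¹ := by rw [transpose_nonsing_inv, hStT]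
  set A := R_Dᵀ * St⁻¹ * R_D with hAdef
  have hA1 : A * A⁻¹ = 1 := mul_nonsing_inv _ hMinv
  have hA2 : A⁻¹ * A = 1 := nonsing_inv_mul _ hMinv
  have hAT : Aᵀ = A := by
    rw [hAdef, transpose_mul, transpose_mul, transpose_transpose, hSinvT, Matrix.mul_assoc]
  have hAinvT : (A⁻¹)ᵀ = A⁻¹ := by rw [transpose_nonsing_inv, hAT]
  set v : Fin N → ℝ := (St⁻¹ * R_D * A⁻¹).mulVec u with hv
  have key := hED v
  -- E_D v = R u
  have hm1 : R * R_Dᵀ * (St⁻¹ * R_D * A⁻¹) = R := by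
    calc R * R_Dᵀ * (St⁻¹ * R_D * A⁻¹)
        = R * (R_Dᵀ * St⁻¹ * R_D * A⁻¹) := by simp only [Matrix.mul_assoc]
      _ = R * (A * A⁻¹) := by rw [hAdef, Matrix.mul_assoc]
      _ = R := by rw [hA1, Matrix.mul_one]
  have h1 : (R * R_Dᵀ).mulVec v = R.mulVec u := by
    rw [hv, mulVec_mulVec, hm1]
  -- v ⬝ S v = u ⬝ A⁻¹ u
  have hT : (St⁻¹ * R_D * A⁻¹)ᵀ = A⁻¹ * (R_Dᵀ * St⁻¹) := by
    rw [transpose_mul, transpose_mul, hSinvT, hAinvT]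
  have hm2 : (St⁻¹ * R_D * A⁻¹)ᵀ * St * (St⁻¹ * R_D * A⁻¹) = A⁻¹ := by
    rw [hT]
    calc A⁻¹ * (R_Dᵀ * St⁻¹) * St * (St⁻¹ * R_D * A⁻¹)
        = A⁻¹ * (R_Dᵀ * (St⁻¹ * (St * (St⁻¹ * (R_D * A⁻¹))))) := by
          simp only [Matrix.mul_assoc]
      _ = A⁻¹ * (R_Dᵀ * (St⁻¹ * St * St⁻¹ * R_D * A⁻¹)) := by
          simp only [Matrix.mul_assoc]
      _ = A⁻¹ * (R_Dᵀ * (St⁻¹ * R_D * A⁻¹)) := by rw [hS2, Matrix.one_mul]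
      _ = A⁻¹ * (A * A⁻¹) := by rw [hAdef]; simp only [Matrix.mul_assoc]
      _ = A⁻¹ := by rw [hA1, Matrix.mul_one]
  have h2 : v ⬝ᵥ St.mulVec v = u ⬝ᵥ (A⁻¹).mulVec u := by
    rw [hv, quad_rw, hm2]
  have h3 : u ⬝ᵥ (Rᵀ * St * R).mulVec u = (R.mulVec u) ⬝ᵥ St.mulVec (R.mulVec u) := by
    rw [quad_rw]
  rw [h3, ← h1, ← h2]
  exact key
end
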